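/- arXiv:1804.09563 — 2 statements merged into one kernel-verified Lean document; each statement's English description precedes it below -/
import Mathlib

section
/- Let θ be a 2×2 real matrix, D* : ℝ² → ℝ² an invertible linear map with D* ∘ θ = θ ∘ D*, ξ ∈ ℝ², and F := {(t,v) ∈ G_θ : D*v = −Λ_t ξ}. For all (t₁,v₁), (t₂,v₂) ∈ G_θ, the right cosets satisfy F·(t₁,v₁) = F·(t₂,v₂) (equivalently (t₁,v₁)·(t₂,v₂)⁻¹ ∈ F) if and only if exp(−t₁θ)D*v₁ − Λ_{−t₁}ξ = exp(−t₂θ)D*v₂ − Λ_{−t₂}ξ. Hence the map π(t,v) := exp(−tθ)D*v − Λ_{−t}ξ identifies the homogeneous space F\G_θ with ℝ². -/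
open Matrix intervalIntegral

noncomputable section

attribute [local instance] Matrix.linftyOpNormedAddCommGroup Matrix.linftyOpNormedSpace

/-- The matrix exponential of a `2 × 2` real matrix. -/
def expm (A : Matrix (Fin 2) (Fin 2) ℝ) : Matrix (Fin 2) (Fin 2) ℝ := NormedSpace.exp A

/-- `Λ_s = ∫₀ˢ exp(uθ) du`. -/
def Lam (θ : Matrix (Fin 2) (Fin 2) ℝ) (s : ℝ) : Matrix (Fin 2) (Fin 2) ℝ :=
  ∫ u in (0:ℝ)..s, expm (u • θ)

/-- Multiplication of the group `G_θ = ℝ ×_ρ ℝ²`. -/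
def gmul (θ : Matrix (Fin 2) (Fin 2) ℝ) (p q : ℝ × (Fin 2 → ℝ)) : ℝ × (Fin 2 → ℝ) :=
  (p.1 + q.1, p.2 + (expm (p.1 • θ)).mulVec q.2)

/-- Inversion of the group `G_θ`: `(t,v)⁻¹ = (−t, −exp(−tθ)v)`. -/
def ginv (θ : Matrix (Fin 2) (Fin 2) ℝ) (p : ℝ × (Fin 2 → ℝ)) : ℝ × (Fin 2 → ℝ) :=
  (-p.1, -(expm ((-p.1) • θ)).mulVec p.2)

/-- The projection `π(t,v) = exp(−tθ)D*v − Λ_{−t}ξ` of `G_θ` onto `F\G_θ ≅ ℝ²`. -/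
def proj (θ Dstar : Matrix (Fin 2) (Fin 2) ℝ) (ξ : Fin 2 → ℝ) (p : ℝ × (Fin 2 → ℝ)) :
    Fin 2 → ℝ :=
  (expm ((-p.1) • θ)).mulVec (Dstar.mulVec p.2) - (Lam θ (-p.1)).mulVec ξ

/-!
`π` is a crossed homomorphism, `π (p * q) = π q + exp(-q₁θ) π p`: this follows from the cocycle
identity `Λ_{s+t} = Λ_s + exp(sθ) Λ_t` and from `D*` commuting with every `exp(sθ)`. Its zero set
is exactly `F`, because `π (t, v) = exp(-tθ) (D* v + Λ_t ξ)`. Applied to `p = (p * q⁻¹) * q` this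
gives `π p - π q = exp(-q₁θ) π (p * q⁻¹)`, which vanishes iff `p * q⁻¹ ∈ F`. Surjectivity comes
from `π (0, v) = D* v`.
-/

attribute [local instance] Matrix.linftyOpNormedRing Matrix.linftyOpNormedAlgebra

section Exponential

variable (θ : Matrix (Fin 2) (Fin 2) ℝ)

lemma expm_add_smul (s t : ℝ) : expm ((s + t) • θ) = expm (s • θ) * expm (t • θ) := by
  rw [expm, expm, expm, add_smul]
  exact Matrix.exp_add_of_commute _ _ (((Commute.refl θ).smul_left s).smul_right t)

lemma expm_zero_smul : expm ((0 : ℝ) • θ) = 1 := by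
  rw [zero_smul, expm, NormedSpace.exp_zero]

lemma expm_neg_smul_mul_expm_smul (s : ℝ) : expm ((-s) • θ) * expm (s • θ) = 1 := by
  rw [← expm_add_smul, neg_add_cancel, expm_zero_smul]

lemma expm_smul_mulVec_eq_zero_iff (s : ℝ) {x : Fin 2 → ℝ} : expm (s • θ) *ᵥ x = 0 ↔ x = 0 := by
  refine ⟨fun h => ?_, fun h => by rw [h, mulVec_zero]⟩
  have h' := congrArg (expm ((-s) • θ) *ᵥ ·) h
  simpa only [mulVec_mulVec, expm_neg_smul_mul_expm_smul, one_mulVec, mulVec_zero] using h'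

lemma continuous_expm_smul : Continuous fun u : ℝ => expm (u • θ) :=
  NormedSpace.exp_continuous.comp (continuous_id.smul continuous_const)

end Exponential

lemma Commute.expm_smul_right {D θ : Matrix (Fin 2) (Fin 2) ℝ} (h : Commute D θ) (s : ℝ) :
    Commute D (expm (s • θ)) :=
  (h.smul_right s).exp_right

section Lam

variable (θ : Matrix (Fin 2) (Fin 2) ℝ)

lemma Lam_zero : Lam θ 0 = 0 :=
  integral_same

lemma Lam_add (s t : ℝ) : Lam θ (s + t) = Lam θ s + expm (s • θ) * Lam θ t := by
  have hcont := continuous_expm_smul θ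
  have hshift : ∫ u in s..s + t, expm (u • θ) = ∫ u in (0 : ℝ)..t, expm (s • θ) * expm (u • θ) := by
    simp only [← expm_add_smul]
    rw [intervalIntegral.integral_comp_add_left (fun u => expm (u • θ)), add_zero]
  rw [Lam, ← integral_add_adjacent_intervals (hcont.intervalIntegrable 0 s)
    (hcont.intervalIntegrable s (s + t)), hshift]
  exact congrArg (Lam θ s + ·)
    ((ContinuousLinearMap.mul ℝ _ (expm (s • θ))).intervalIntegral_comp_comm
      (hcont.intervalIntegrable 0 t))

lemma expm_neg_smul_mul_Lam (t : ℝ) : expm ((-t) • θ) * Lam θ t = -Lam θ (-t) := by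
  have h := Lam_add θ (-t) t
  rw [neg_add_cancel, Lam_zero] at h
  exact (neg_eq_of_add_eq_zero_right h.symm).symm

end Lam

lemma ginv_gmul_cancel_right (θ : Matrix (Fin 2) (Fin 2) ℝ) (p q : ℝ × (Fin 2 → ℝ)) :
    gmul θ (gmul θ p (ginv θ q)) q = p := by
  obtain ⟨a, v⟩ := p
  obtain ⟨b, w⟩ := q
  simp only [gmul, ginv, mulVec_neg, mulVec_mulVec, ← expm_add_smul, neg_add_cancel_right]

section Projection

variable {θ D : Matrix (Fin 2) (Fin 2) ℝ} {ξ : Fin 2 → ℝ}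

lemma proj_gmul (hcomm : Commute D θ) (p q : ℝ × (Fin 2 → ℝ)) :
    proj θ D ξ (gmul θ p q) = proj θ D ξ q + expm ((-q.1) • θ) *ᵥ proj θ D ξ p := by
  obtain ⟨a, v⟩ := p
  obtain ⟨b, w⟩ := q
  have hD : D * expm (a • θ) = expm (a • θ) * D := (hcomm.expm_smul_right a).eq
  simp only [proj, gmul, neg_add_rev, expm_add_smul, Lam_add, mulVec_add, mulVec_sub,
    add_mulVec, mulVec_mulVec, mul_assoc]
  rw [hD, ← mul_assoc (expm ((-a) • θ)), expm_neg_smul_mul_expm_smul, one_mul]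
  abel

lemma proj_eq_zero_iff (r : ℝ × (Fin 2 → ℝ)) :
    proj θ D ξ r = 0 ↔ D *ᵥ r.2 = -(Lam θ r.1 *ᵥ ξ) := by
  have h : proj θ D ξ r = expm ((-r.1) • θ) *ᵥ (D *ᵥ r.2 + Lam θ r.1 *ᵥ ξ) := by
    rw [proj, mulVec_add, mulVec_mulVec ξ, expm_neg_smul_mul_Lam, neg_mulVec,
      sub_eq_add_neg]
  rw [h, expm_smul_mulVec_eq_zero_iff, add_eq_zero_iff_eq_neg]

lemma proj_surjective (hD : IsUnit D) : Function.Surjective (proj θ D ξ) := by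
  intro y
  obtain ⟨v, rfl⟩ := Matrix.mulVec_surjective_iff_isUnit.2 hD y
  refine ⟨(0, v), ?_⟩
  rw [proj, neg_zero, expm_zero_smul, Lam_zero, one_mulVec, zero_mulVec, sub_zero]

end Projection

/-- Let `D*` be invertible and commute with `θ`, `ξ ∈ ℝ²`, and
`F = {(t,v) : D*v = −Λ_tξ}`.  Two elements of `G_θ` have the same right `F`-coset, i.e.
`(t₁,v₁)·(t₂,v₂)⁻¹ ∈ F`, if and only if `π(t₁,v₁) = π(t₂,v₂)`, where
`π(t,v) = exp(−tθ)D*v − Λ_{−t}ξ`.  Moreover `π` is surjective, so `π` identifies `F\G_θ`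
with `ℝ²`. -/
theorem coset_identification (θ Dstar : Matrix (Fin 2) (Fin 2) ℝ)
    (hunit : IsUnit Dstar) (hcomm : Dstar * θ = θ * Dstar) (ξ : Fin 2 → ℝ) :
    (∀ p q : ℝ × (Fin 2 → ℝ),
      gmul θ p (ginv θ q) ∈
          {r : ℝ × (Fin 2 → ℝ) | Dstar.mulVec r.2 = -(Lam θ r.1).mulVec ξ} ↔
        proj θ Dstar ξ p = proj θ Dstar ξ q) ∧
    Function.Surjective (proj θ Dstar ξ) := by
  refine ⟨fun p q => ?_, proj_surjective hunit⟩
  have hproj := proj_gmul (ξ := ξ) hcomm (gmul θ p (ginv θ q)) q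
  rw [ginv_gmul_cancel_right] at hproj
  rw [Set.mem_ofPred_eq, ← proj_eq_zero_iff, ← expm_smul_mulVec_eq_zero_iff θ (-q.1),
    hproj, add_eq_left]
end
end

section
/- Let λ ∈ ℝ with λ ≠ 0, θ := [[λ,−1],[1,λ]] (which is invertible), Λ_t := (exp(tθ) − 1)θ⁻¹, and let ζ ∈ ℝ² with ζ ≠ 0. Then the set {s·Λ_t ζ : t ∈ ℝ, s > 0} equals all of ℝ²; i.e., the spiral t ↦ Λ_t ζ meets every ray from the origin. -/
open Matrix

noncomputable section

/-!
Identify `ℝ²` with `ℂ`: then `θ` is multiplication by `w = λ + i`, `exp (tθ)` is multiplication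
by `e^{tw}`, and `Λ_t ζ` is `(e^{tw} - 1) w⁻¹ z`. Reaching the ray through `X ≠ 0` thus means
`e^{tw} ∈ 1 + ℝ_{>0} u` with `u = w X / z`. For `λ > 0` write `u = |u| e^{iα}` and rotate by
`e^{-iα}`: the point `q = e^{λ(τ+α)} e^{iτ}` must satisfy `Im q = -sin α` and `Re q > cos α`.
On a half-turn where `cos τ ≥ 0` and `e^{λ(τ+α)} > 1` the intermediate value theorem gives the
first, and then `|q| > 1 = |e^{-iα}|` forces the second. For `λ < 0`, conjugate and reverse time.
-/

namespace Real

theorem exists_mul_sin_eq_of_one_lt {g : ℝ → ℝ} (hg : Continuous g) {T y : ℝ}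
    (hgT : ∀ τ ≥ T, 1 < g τ) (hy : |y| ≤ 1) : ∃ τ, T ≤ τ ∧ 0 ≤ cos τ ∧ g τ * sin τ = y := by
  obtain ⟨n, hn⟩ := exists_nat_ge ((T + π / 2) / (2 * π))
  set a := n * (2 * π) - π / 2 with ha
  have hTa : T ≤ a := by
    rw [div_le_iff₀ (by positivity)] at hn
    rw [ha]; linarith
  have hsin_a : sin a = -1 := by simp [a]
  have hsin_b : sin (a + π) = 1 := by
    rw [show a + π = n * (2 * π) + π / 2 by ring]; simp [sin_add_pi_div_two]
  have hya : g a * sin a ≤ y := by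
    rw [hsin_a]; linarith [hgT a hTa, neg_abs_le y]
  have hyb : y ≤ g (a + π) * sin (a + π) := by
    rw [hsin_b]; linarith [hgT (a + π) (by linarith [pi_pos]), le_abs_self y]
  obtain ⟨τ, ⟨haτ, hτb⟩, hτ⟩ := intermediate_value_Icc (by linarith [pi_pos])
    (hg.mul continuous_sin).continuousOn ⟨hya, hyb⟩
  refine ⟨τ, hTa.trans haτ, ?_, hτ⟩
  rw [← cos_sub_nat_mul_two_pi τ n]
  exact cos_nonneg_of_mem_Icc ⟨by rw [ha] at haτ; linarith, by rw [ha] at hτb; linarith⟩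

end Real

namespace Complex

open ComplexConjugate

theorem re_lt_re_of_im_eq_of_norm_lt {q v : ℂ} (him : q.im = v.im) (hre : 0 ≤ q.re)
    (hnorm : ‖v‖ < ‖q‖) : v.re < q.re := by
  have hsq : v.re ^ 2 < q.re ^ 2 := by
    have := pow_lt_pow_left₀ hnorm (norm_nonneg v) two_ne_zero
    rw [Complex.sq_norm, Complex.sq_norm, normSq_apply, normSq_apply, him] at this
    nlinarith
  exact (le_abs_self _).trans_lt (abs_lt_of_sq_lt_sq hsq hre)

theorem ofReal_add_I_ne_zero (l : ℝ) : (l + I : ℂ) ≠ 0 := by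
  simp [Complex.ext_iff]

theorem exists_exp_mul_eq_one_add_mul_of_pos {l : ℝ} (hl : 0 < l) {u : ℂ} (hu : u ≠ 0) :
    ∃ t r : ℝ, 0 < r ∧ exp (t * (l + I)) = 1 + r * u := by
  set α := arg u
  have hgT : ∀ τ ≥ 1 - α, 1 < Real.exp (l * (τ + α)) := fun τ hτ ↦
    Real.one_lt_exp_iff.2 (mul_pos hl (by linarith))
  obtain ⟨τ, hτ, hcos, hsin⟩ := Real.exists_mul_sin_eq_of_one_lt (by fun_prop) hgT
    (y := -Real.sin α) (by simpa using Real.abs_sin_le_one α)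
  set E := Real.exp (l * (τ + α))
  -- `q` and `v` are `exp ((τ + α) * (l + I))` and `1` rotated by `-α`
  set q : ℂ := E * exp (τ * I)
  set v : ℂ := exp (↑(-α) * I)
  have hq : exp (↑(τ + α) * (l + I)) = q * exp (α * I) := by
    simp only [q, E, ofReal_exp, ← exp_add]; push_cast; ring_nf
  have hq_re : q.re = E * Real.cos τ := by rw [re_ofReal_mul, exp_ofReal_mul_I_re]
  have hq_im : q.im = v.im := by
    rw [im_ofReal_mul, exp_ofReal_mul_I_im, exp_ofReal_mul_I_im, hsin, Real.sin_neg]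
  have hlt : v.re < q.re := by
    refine re_lt_re_of_im_eq_of_norm_lt hq_im (hq_re ▸ mul_nonneg (by positivity) hcos) ?_
    rw [norm_mul, norm_exp_ofReal_mul_I, norm_exp_ofReal_mul_I, mul_one, norm_real,
      Real.norm_of_nonneg (by positivity)]
    exact hgT τ hτ
  have hqv : q = v + ↑(q.re - v.re) := by
    apply Complex.ext <;> simp [hq_im]
  refine ⟨τ + α, (q.re - v.re) / ‖u‖, div_pos (sub_pos.2 hlt) (norm_pos_iff.2 hu), ?_⟩
  calc exp (↑(τ + α) * (l + I)) = (v + ↑(q.re - v.re)) * exp (α * I) := by rw [hq, ← hqv]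
    _ = 1 + ↑(q.re - v.re) * exp (α * I) := by
        rw [add_mul, ← exp_add]; push_cast; ring_nf; simp
    _ = 1 + ↑((q.re - v.re) / ‖u‖) * u := by
        nth_rw 2 [← norm_mul_exp_arg_mul_I u]
        have hnu : (‖u‖ : ℂ) ≠ 0 := by exact_mod_cast norm_ne_zero_iff.2 hu
        push_cast; field_simp; rw [mul_comm I]

theorem exists_exp_mul_eq_one_add_mul {l : ℝ} (hl : l ≠ 0) {u : ℂ} (hu : u ≠ 0) :
    ∃ t r : ℝ, 0 < r ∧ exp (t * (l + I)) = 1 + r * u := by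
  rcases hl.lt_or_gt with hneg | hpos
  · obtain ⟨t, r, hr, h⟩ :=
      exists_exp_mul_eq_one_add_mul_of_pos (neg_pos.2 hneg) ((map_ne_zero conj).2 hu)
    refine ⟨-t, r, hr, ?_⟩
    have hconj : (↑(-t) * (↑l + I) : ℂ) = conj (↑t * (↑(-l) + I)) := by
      simp only [map_mul, map_add, conj_ofReal, conj_I]; push_cast; ring
    rw [hconj, Complex.exp_conj, h]
    simp
  · exact exists_exp_mul_eq_one_add_mul_of_pos hpos hu

theorem exists_pos_mul_exp_mul_sub_one_mul_eq {l : ℝ} (hl : l ≠ 0) {z : ℂ} (hz : z ≠ 0) (X : ℂ) :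
    ∃ t s : ℝ, 0 < s ∧ X = s * ((exp (t * (l + I)) - 1) * (l + I)⁻¹ * z) := by
  rcases eq_or_ne X 0 with rfl | hX
  · exact ⟨0, 1, one_pos, by simp⟩
  have hw := ofReal_add_I_ne_zero l
  obtain ⟨t, r, hr, h⟩ := exists_exp_mul_eq_one_add_mul hl (u := (l + I) * X / z) (by simp [*])
  refine ⟨t, r⁻¹, inv_pos.2 hr, ?_⟩
  have hr' : (r : ℂ) ≠ 0 := by exact_mod_cast hr.ne'
  rw [h]; push_cast; field_simp; ring

theorem exists_coe_basisOneI_repr_eq (x : Fin 2 → ℝ) : ∃ z : ℂ, ⇑(basisOneI.repr z) = x :=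
  ⟨⟨x 0, x 1⟩, by ext i; fin_cases i <;> simp⟩

end Complex

theorem Matrix.map_inv_of_field {K R n F : Type*} [Field K] [CommRing R] [Fintype n]
    [DecidableEq n] [FunLike F K (Matrix n n R)] [RingHomClass F K (Matrix n n R)] (f : F)
    (w : K) : f w⁻¹ = (f w)⁻¹ := by
  rcases eq_or_ne w 0 with rfl | hw
  · simp
  · exact (inv_eq_right_inv (by rw [← map_mul, mul_inv_cancel₀ hw, map_one])).symm

section

open Complex

attribute [local instance] Matrix.linftyOpNormedRing Matrix.linftyOpNormedAlgebra

-- the `linfty` operator norm induces the product topology, so both sides use the same `exp`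
theorem expm_leftMulMatrix_basisOneI (z : ℂ) :
    expm (Algebra.leftMulMatrix basisOneI z) = Algebra.leftMulMatrix basisOneI (exp z) := by
  rw [expm, exp_eq_exp_ℂ, NormedSpace.map_exp (Algebra.leftMulMatrix basisOneI)
    (Algebra.leftMulMatrix basisOneI).toLinearMap.continuous_of_finiteDimensional]
  rfl

end

/-- Let `λ ≠ 0`, `θ = [[λ,−1],[1,λ]]` (which is invertible), and
`Λ_t = (exp(tθ) − 1)θ⁻¹`.  For every `ζ ≠ 0`, the set `{s·Λ_tζ : t ∈ ℝ, s > 0}` is all of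
`ℝ²`: the spiral `t ↦ Λ_tζ` meets every ray from the origin. -/
theorem spiral_covers_plane (l : ℝ) (hl : l ≠ 0) (ζ : Fin 2 → ℝ) (hζ : ζ ≠ 0) :
    IsUnit (!![l, -1; 1, l] : Matrix (Fin 2) (Fin 2) ℝ) ∧
    {x : Fin 2 → ℝ | ∃ (t s : ℝ), 0 < s ∧
        x = s • ((expm (t • !![l, -1; 1, l]) - 1) * (!![l, -1; 1, l])⁻¹).mulVec ζ}
      = Set.univ := by
  set M := Algebra.leftMulMatrix Complex.basisOneI
  have hθ : (!![l, -1; 1, l] : Matrix (Fin 2) (Fin 2) ℝ) = M (l + Complex.I) := by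
    simp [M, Algebra.leftMulMatrix_complex]
  obtain ⟨z, rfl⟩ := Complex.exists_coe_basisOneI_repr_eq ζ
  have hz : z ≠ 0 := by rintro rfl; simp at hζ
  refine ⟨hθ ▸ (isUnit_iff_ne_zero.2 (Complex.ofReal_add_I_ne_zero l)).map M,
    Set.eq_univ_of_forall fun x ↦ ?_⟩
  obtain ⟨X, rfl⟩ := Complex.exists_coe_basisOneI_repr_eq x
  obtain ⟨t, s, hs, rfl⟩ := Complex.exists_pos_mul_exp_mul_sub_one_mul_eq hl hz X
  refine ⟨t, s, hs, ?_⟩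
  rw [hθ, ← map_smul, expm_leftMulMatrix_basisOneI, ← Matrix.map_inv_of_field, ← map_one M,
    ← map_sub, ← map_mul, Algebra.leftMulMatrix_mulVec_repr, Complex.real_smul]
  simp
end
end
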